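/- Let $f$ be a Pettis integrable basic function with values in $\ell_2$ and let $\tau \in \{0,1\}^{<\infty}$. Then $\|\int_{I_\tau} f\| \ge \|\int_{I_\tau} f_{|\tau}\| = \sqrt{\sum_{(\sigma,i) \in \mathbf{B}, \sigma \in [\tau]} c(\sigma,i)^2}$, where $[\tau]$ denotes the set of finite binary sequences extending $\tau$. -/

import Mathlib

/-!
Since the sets `A(σ,i)` are pairwise disjoint, at every point at most one term of the series
defining a basic function is nonzero, so continuous functionals pass through the series.
Testing the Pettis integral `w` of `f` over `I_τ` against `⟪e(σ,i), ·⟫` gives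
`⟪e(σ,i), w⟫ = λ(A(σ,i) ∩ I_τ) / λ(A(σ,i)) · c(σ,i)`, which is `c(σ,i)` when `σ ∈ [τ]`, because
then `A(σ,i) ⊆ I_σ ⊆ I_τ`. So `∫_{I_τ} f_{|τ}` has coordinates `c(σ,i)` for `σ ∈ [τ]` and `0`
otherwise, and `∫_{I_τ} f` shares the coordinates with `σ ∈ [τ]`. The integral is not known to lie
in the closed span of the `e(σ,i)`, so instead of Parseval we test it against itself and integrate
term by term to get its norm; Bessel's inequality for `∫_{I_τ} f` then gives the comparison.
-/

open MeasureTheory Set Function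
open scoped Classical RealInnerProductSpace

noncomputable section

/-- The Hilbert space `ℓ₂` of square-summable real sequences. -/
abbrev H2 : Type := lp (fun _ : ℕ => ℝ) 2

/-- The index set `B = {(σ,i) : σ ∈ {0,1}^{<∞}, 0 ≤ i ≤ |σ|}`. -/
def Bidx : Type := Σ σ : List Bool, Fin (σ.length + 1)

/-- Left endpoint of the dyadic interval `I_σ`. -/
noncomputable def dyadicLeft (σ : List Bool) : ℝ :=
  ∑ i ∈ Finset.range σ.length, if σ.getD i false then (2:ℝ)⁻¹ ^ (i+1) else 0

/-- The dyadic interval `I_σ ⊆ [0,1]` of length `2^{-|σ|}`: `I_∅ = [0,1]`,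
`I_{σ0}` is the left half and `I_{σ1}` the right half of `I_σ`. -/
noncomputable def dyadicInterval (σ : List Bool) : Set ℝ :=
  Set.Icc (dyadicLeft σ) (dyadicLeft σ + (2:ℝ)⁻¹ ^ σ.length)

/-- `f` is Pettis integrable with respect to `μ`: every continuous functional composed with
`f` is integrable, and over each measurable set there is a vector representing the integrals. -/
def PettisIntegrable {X : Type} [NormedAddCommGroup X] [NormedSpace ℝ X]
    (f : ℝ → X) (μ : MeasureTheory.Measure ℝ) : Prop :=
  (∀ φ : X →L[ℝ] ℝ, MeasureTheory.Integrable (fun t => φ (f t)) μ) ∧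
  ∀ E : Set ℝ, MeasurableSet E → ∃ v : X, ∀ φ : X →L[ℝ] ℝ, φ v = ∫ t in E, φ (f t) ∂μ

/-- `v` is the Pettis integral of `f` over the set `E` (w.r.t. `μ`). -/
def IsPettisIntegralOn {X : Type} [NormedAddCommGroup X] [NormedSpace ℝ X]
    (f : ℝ → X) (μ : MeasureTheory.Measure ℝ) (E : Set ℝ) (v : X) : Prop :=
  ∀ φ : X →L[ℝ] ℝ, φ v = ∫ t in E, φ (f t) ∂μ

/-- The basic function `f = ∑_{(σ,i) ∈ B} c(σ,i) (1/λ(A(σ,i))) e(σ,i) χ_{A(σ,i)}`. -/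
noncomputable def basicFun {X : Type} [NormedAddCommGroup X] [NormedSpace ℝ X]
    (c : Bidx → ℝ) (A : Bidx → Set ℝ) (e : Bidx → X) : ℝ → X :=
  fun t => ∑' p : Bidx,
    Set.indicator (A p) (fun _ => ((MeasureTheory.volume (A p)).toReal)⁻¹ • (c p • e p)) t

/-- The restriction `f_{|τ}`: the subseries of the basic function over indices `(σ,i)`
with `σ` an extension of `τ`. -/
noncomputable def basicFunRes {X : Type} [NormedAddCommGroup X] [NormedSpace ℝ X]
    (τ : List Bool) (c : Bidx → ℝ) (A : Bidx → Set ℝ) (e : Bidx → X) : ℝ → X :=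
  basicFun (fun p => if τ <+: p.1 then c p else 0) A e

lemma sum_range_inv_two_pow_succ (n : ℕ) :
    ∑ i ∈ Finset.range n, (2:ℝ)⁻¹ ^ (i + 1) = 1 - (2:ℝ)⁻¹ ^ n := by
  induction n with
  | zero => simp
  | succ n ih => rw [Finset.sum_range_succ, ih, pow_succ]; ring

lemma dyadicLeft_nonneg (σ : List Bool) : 0 ≤ dyadicLeft σ :=
  Finset.sum_nonneg fun _ _ => by split <;> positivity

lemma dyadicInterval_subset_Icc (σ : List Bool) : dyadicInterval σ ⊆ Icc 0 1 := by
  refine Icc_subset_Icc (dyadicLeft_nonneg σ) ?_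
  have h : dyadicLeft σ ≤ ∑ i ∈ Finset.range σ.length, (2:ℝ)⁻¹ ^ (i + 1) :=
    Finset.sum_le_sum fun _ _ => by split <;> [exact le_rfl; positivity]
  rw [sum_range_inv_two_pow_succ] at h
  linarith

lemma measurableSet_dyadicInterval (σ : List Bool) : MeasurableSet (dyadicInterval σ) :=
  measurableSet_Icc

lemma dyadicLeft_append_singleton (σ : List Bool) (b : Bool) :
    dyadicLeft (σ ++ [b]) = dyadicLeft σ + if b then (2:ℝ)⁻¹ ^ (σ.length + 1) else 0 := by
  unfold dyadicLeft
  rw [List.length_append, List.length_singleton, Finset.sum_range_succ]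
  congr 1
  · refine Finset.sum_congr rfl fun i hi => ?_
    rw [List.getD_append _ _ _ _ (Finset.mem_range.mp hi)]
  · rw [List.getD_eq_getElem?_getD, List.getElem?_append_right le_rfl]
    simp

lemma dyadicInterval_append_singleton_subset (σ : List Bool) (b : Bool) :
    dyadicInterval (σ ++ [b]) ⊆ dyadicInterval σ := by
  unfold dyadicInterval
  rw [dyadicLeft_append_singleton, List.length_append, List.length_singleton, pow_succ]
  have : (0:ℝ) < (2:ℝ)⁻¹ ^ σ.length := by positivity
  apply Icc_subset_Icc <;> split <;> linarith

lemma dyadicInterval_subset_of_prefix {τ σ : List Bool} (h : τ <+: σ) :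
    dyadicInterval σ ⊆ dyadicInterval τ := by
  obtain ⟨ρ, rfl⟩ := h
  induction ρ using List.reverseRecOn with
  | nil => simp
  | append_singleton ρ b ih =>
    rw [← List.append_assoc]
    exact (dyadicInterval_append_singleton_subset _ _).trans ih

instance : Countable Bidx :=
  inferInstanceAs (Countable (Σ σ : List Bool, Fin (σ.length + 1)))

lemma summable_indicator_apply_of_pairwise_disjoint {α ι M : Type*} [AddCommMonoid M]
    [TopologicalSpace M] {A : ι → Set α} (hdisj : Pairwise (Disjoint on A))
    (g : ι → α → M) (t : α) : Summable fun i => (A i).indicator (g i) t := by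
  refine summable_of_hasFiniteSupport (Set.Subsingleton.finite ?_ |>.subset fun i hi =>
    (Set.indicator_apply_ne_zero.mp hi).1)
  exact fun i hi j hj => hdisj.eq (Set.not_disjoint_iff.mpr ⟨t, hi, hj⟩)

lemma Orthonormal.tsum_sq_le_norm_sq {ι X : Type*} [NormedAddCommGroup X]
    [InnerProductSpace ℝ X] {e : ι → X} (he : Orthonormal ℝ e) {x : X} {d : ι → ℝ}
    (hd : ∀ i, d i ≠ 0 → ⟪e i, x⟫ = d i) : ∑' i, d i ^ 2 ≤ ‖x‖ ^ 2 := by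
  have hle : ∀ i, d i ^ 2 ≤ ‖⟪e i, x⟫‖ ^ 2 := fun i => by
    by_cases hi : d i = 0
    · simpa [hi] using sq_nonneg _
    · rw [hd i hi, Real.norm_eq_abs, sq_abs]
  have hsum := he.inner_products_summable x
  exact ((hsum.of_nonneg_of_le (fun _ => sq_nonneg _) hle).tsum_le_tsum hle hsum).trans
    (he.tsum_inner_products_le x)

section BasicFun

variable {X : Type} [NormedAddCommGroup X] [InnerProductSpace ℝ X] {A : Bidx → Set ℝ}
  {e : Bidx → X}

lemma inner_basicFun (hdisj : Pairwise (Disjoint on A)) (d : Bidx → ℝ) (x : X) (t : ℝ) :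
    ⟪x, basicFun d A e t⟫ =
      ∑' p, (A p).indicator (fun _ => (volume.real (A p))⁻¹ * (d p * ⟪x, e p⟫)) t := by
  rw [basicFun, ← innerSL_apply_apply ℝ,
    (innerSL ℝ x).map_tsum (summable_indicator_apply_of_pairwise_disjoint hdisj _ t)]
  congr 1 with p
  by_cases ht : t ∈ A p
  · simp [ht, measureReal_def]
  · simp [ht]

lemma inner_orthonormal_basicFun (hdisj : Pairwise (Disjoint on A)) (he : Orthonormal ℝ e)
    (d : Bidx → ℝ) (q : Bidx) (t : ℝ) :
    ⟪e q, basicFun d A e t⟫ = (A q).indicator (fun _ => (volume.real (A q))⁻¹ * d q) t := by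
  rw [inner_basicFun hdisj, tsum_eq_single q fun p hp => by simp [he.2 hp.symm]]
  simp [he.1 q]

lemma IsPettisIntegralOn.inner_orthonormal_eq (hdisj : Pairwise (Disjoint on A))
    (he : Orthonormal ℝ e) {q : Bidx} (hAq : MeasurableSet (A q)) {d : Bidx → ℝ}
    {μ : Measure ℝ} {S : Set ℝ} {w : X} (hw : IsPettisIntegralOn (basicFun d A e) μ S w) :
    ⟪e q, w⟫ = (μ.restrict S).real (A q) * ((volume.real (A q))⁻¹ * d q) := by
  rw [← innerSL_apply_apply ℝ, hw]
  simp only [innerSL_apply_apply, inner_orthonormal_basicFun hdisj he]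
  rw [integral_indicator_const _ hAq, smul_eq_mul]

lemma IsPettisIntegralOn.norm_sq_eq_tsum (hdisj : Pairwise (Disjoint on A))
    (he : Orthonormal ℝ e) (hAm : ∀ p, MeasurableSet (A p)) {d : Bidx → ℝ} {μ : Measure ℝ}
    [IsFiniteMeasure μ] {S : Set ℝ} {w : X} (hw : IsPettisIntegralOn (basicFun d A e) μ S w)
    (hcoef : ∀ p, ⟪e p, w⟫ = d p) :
    ‖w‖ ^ 2 = ∑' p, d p ^ 2 := by
  set F : Bidx → ℝ → ℝ := fun p => (A p).indicator fun _ => (volume.real (A p))⁻¹ * d p ^ 2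
  have hF : ∀ p, ∫ t in S, F p t ∂μ = d p ^ 2 := fun p => by
    have hp := (hw.inner_orthonormal_eq hdisj he (hAm p)).symm.trans (hcoef p)
    rw [integral_indicator_const _ (hAm p), smul_eq_mul]
    linear_combination d p * hp
  have hF_nonneg : ∀ p t, 0 ≤ F p t := fun p => indicator_nonneg fun _ _ => by positivity
  have hsum : Summable fun p => d p ^ 2 :=
    (he.inner_products_summable w).congr fun p => by rw [hcoef, Real.norm_eq_abs, sq_abs]
  calc ‖w‖ ^ 2 = ∫ t in S, ⟪w, basicFun d A e t⟫ ∂μ := by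
        rw [← real_inner_self_eq_norm_sq, ← innerSL_apply_apply ℝ, hw]
        rfl
    _ = ∫ t in S, ∑' p, F p t ∂μ := by
        simp_rw [inner_basicFun hdisj, fun p => real_inner_comm (e p) w, hcoef, ← sq]
        rfl
    _ = ∑' p, ∫ t in S, F p t ∂μ := by
        refine (integral_tsum_of_summable_integral_norm
          (fun p => (integrable_const _).indicator (hAm p)) (hsum.congr fun p => ?_)).symm
        rw [← hF p]
        congr 1 with t
        exact (Real.norm_of_nonneg (hF_nonneg p t)).symm
    _ = ∑' p, d p ^ 2 := tsum_congr hF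

lemma IsPettisIntegralOn.inner_orthonormal_eq_of_prefix
    (hdisj : Pairwise (Disjoint on A)) (he : Orthonormal ℝ e) {q : Bidx}
    (hAq : MeasurableSet (A q)) (hAq_sub : A q ⊆ dyadicInterval q.1) (hAq_pos : 0 < volume (A q))
    {τ : List Bool} (hq : τ <+: q.1) {d : Bidx → ℝ} {w : X}
    (hw : IsPettisIntegralOn (basicFun d A e) (volume.restrict (Icc 0 1)) (dyadicInterval τ) w) :
    ⟪e q, w⟫ = d q := by
  have hsub : A q ⊆ dyadicInterval τ := hAq_sub.trans (dyadicInterval_subset_of_prefix hq)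
  have hmass : ((volume.restrict (Icc 0 1)).restrict (dyadicInterval τ)).real (A q) =
      volume.real (A q) := by
    rw [Measure.restrict_restrict (measurableSet_dyadicInterval τ),
      measureReal_restrict_apply hAq,
      inter_eq_left.mpr (subset_inter hsub (hsub.trans (dyadicInterval_subset_Icc τ)))]
  have hvol : volume.real (A q) ≠ 0 :=
    (ENNReal.toReal_pos hAq_pos.ne' ((measure_mono hAq_sub).trans_lt measure_Icc_lt_top).ne).ne'
  rw [hw.inner_orthonormal_eq hdisj he hAq, hmass]
  field_simp

end BasicFun

theorem stmt7_general (A : Bidx → Set ℝ) (hAc : ∀ p, IsClosed (A p))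
    (hAs : ∀ p : Bidx, A p ⊆ dyadicInterval p.1)
    (hApos : ∀ p, 0 < volume (A p))
    (hdisj : ∀ p q : Bidx, p ≠ q → Disjoint (A p) (A q))
    (e : Bidx → H2) (he : Orthonormal ℝ e) (c : Bidx → ℝ)
    (τ : List Bool) (v vres : H2)
    (hv : IsPettisIntegralOn (basicFun c A e) (volume.restrict (Set.Icc 0 1))
      (dyadicInterval τ) v)
    (hvres : IsPettisIntegralOn (basicFunRes τ c A e) (volume.restrict (Set.Icc 0 1))
      (dyadicInterval τ) vres) :
    ‖vres‖ ≤ ‖v‖ ∧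
    ‖vres‖ = Real.sqrt (∑' p : Bidx, if τ <+: p.1 then c p ^ 2 else 0) := by
  have hAm : ∀ p, MeasurableSet (A p) := fun p => (hAc p).measurableSet
  have hcoef_v : ∀ q, τ <+: q.1 → ⟪e q, v⟫ = c q := fun q hq =>
    hv.inner_orthonormal_eq_of_prefix hdisj he (hAm q) (hAs q) (hApos q) hq
  have hcoef_res : ∀ q, ⟪e q, vres⟫ = if τ <+: q.1 then c q else 0 := fun q => by
    split_ifs with hq
    · exact (hvres.inner_orthonormal_eq_of_prefix hdisj he (hAm q) (hAs q) (hApos q) hq).trans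
        (if_pos hq)
    · simp [hvres.inner_orthonormal_eq hdisj he (hAm q), hq]
  have hnorm := hvres.norm_sq_eq_tsum hdisj he hAm hcoef_res
  refine ⟨?_, ?_⟩
  · have hle : ∑' p, (if τ <+: p.1 then c p else 0) ^ 2 ≤ ‖v‖ ^ 2 :=
      he.tsum_sq_le_norm_sq fun q hq => by
        split_ifs at hq ⊢ with hτ
        exacts [hcoef_v q hτ, absurd rfl hq]
    rw [← hnorm] at hle
    exact (pow_le_pow_iff_left₀ (norm_nonneg _) (norm_nonneg _) two_ne_zero).mp hle
  · rw [← Real.sqrt_sq (norm_nonneg vres), hnorm]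
    exact congrArg _ (tsum_congr fun p => by split_ifs <;> simp)

/-- Lemma 3.1(3): for a Pettis integrable basic function `f` with values in `ℓ₂` and
`τ ∈ {0,1}^{<∞}`, `‖∫_{I_τ} f‖ ≥ ‖∫_{I_τ} f_{|τ}‖ = √(∑_{σ ∈ [τ]} c(σ,i)²)`. -/
theorem stmt7 (A : Bidx → Set ℝ) (hAc : ∀ p, IsClosed (A p))
    (hAs : ∀ p : Bidx, A p ⊆ dyadicInterval p.1)
    (hApos : ∀ p, 0 < volume (A p))
    (hdisj : ∀ p q : Bidx, p ≠ q → Disjoint (A p) (A q))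
    (e : Bidx → H2) (he : Orthonormal ℝ e) (c : Bidx → ℝ)
    (hP : PettisIntegrable (basicFun c A e) (volume.restrict (Set.Icc 0 1)))
    (τ : List Bool) (v vres : H2)
    (hv : IsPettisIntegralOn (basicFun c A e) (volume.restrict (Set.Icc 0 1))
      (dyadicInterval τ) v)
    (hvres : IsPettisIntegralOn (basicFunRes τ c A e) (volume.restrict (Set.Icc 0 1))
      (dyadicInterval τ) vres) :
    ‖vres‖ ≤ ‖v‖ ∧
    ‖vres‖ = Real.sqrt (∑' p : Bidx, if τ <+: p.1 then c p ^ 2 else 0) :=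
  stmt7_general A hAc hAs hApos hdisj e he c τ v vres hv hvres
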